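/- Let G = (V, E) be a simple graph and suppose the sequences {d_k}, {b_k} additionally satisfy d_{k+1} ≥ 2(d_k + b_k) for all k. Then for every e ∈ E, every k ≥ 1, and every N ∈ M_k(e), the inclusion N ⊆ B_e(d_k/2) holds. -/

import Mathlib

open SimpleGraph Filter MeasureTheory ENNReal

noncomputable section

namespace UFPaper

variable {V : Type*}

/-- Distance between two edges of `G`, i.e. the graph distance in the line graph `L(G)`,
valued in `ℝ≥0∞` (with `∞` for unreachable pairs). -/
noncomputable def eDist (G : SimpleGraph V) (e f : G.edgeSet) : ℝ≥0∞ :=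
  ((G.lineGraph.edist e f : ℕ∞) : ℝ≥0∞)

/-- `B_e(r)`: the set of edges within distance `r` of the edge `e`. -/
def ball (G : SimpleGraph V) (e : G.edgeSet) (r : ℝ) : Set G.edgeSet :=
  {f | eDist G e f ≤ ENNReal.ofReal r}

/-- `dist(C, C')`: the minimum distance between two subsets of edges. -/
noncomputable def setDist (G : SimpleGraph V) (C C' : Set G.edgeSet) : ℝ≥0∞ :=
  ⨅ e ∈ C, ⨅ f ∈ C', eDist G e f

/-- `diam(C)`: the diameter of a subset of edges. -/
noncomputable def diam (G : SimpleGraph V) (C : Set G.edgeSet) : ℝ≥0∞ :=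
  ⨆ e ∈ C, ⨆ f ∈ C, eDist G e f

/-- Two edges `e, f` are `(r, R)`-isolated if `f ∉ B_e(R) \ B_e(r)`. -/
def IsolatedPair (G : SimpleGraph V) (r R : ℝ) (e f : G.edgeSet) : Prop :=
  f ∉ ball G e R \ ball G e r

/-- An edge `e` is `(r, R)`-isolated in `N` if `e` and `f` are `(r, R)`-isolated
for every `f ∈ N`. -/
def IsolatedIn (G : SimpleGraph V) (r R : ℝ) (N : Set G.edgeSet) (e : G.edgeSet) : Prop :=
  ∀ f ∈ N, IsolatedPair G r R e f

/-- `C ⊆ N` is a `(D, B)`-cluster in `N` if `diam C ≤ D` and `dist(N \ C, C) > B`. -/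
def IsCluster (G : SimpleGraph V) (D B : ℝ) (N C : Set G.edgeSet) : Prop :=
  C ⊆ N ∧ diam G C ≤ ENNReal.ofReal D ∧ ENNReal.ofReal B < setDist G (N \ C) C

/-- An edge is `(D, B)`-clustered in `N` if it belongs to some `(D, B)`-cluster in `N`. -/
def ClusteredIn (G : SimpleGraph V) (D B : ℝ) (N : Set G.edgeSet) (e : G.edgeSet) : Prop :=
  ∃ C : Set G.edgeSet, IsCluster G D B N C ∧ e ∈ C

/-- The level-`k` clustered sets `𝖭_k`. -/
def clusteredSet (G : SimpleGraph V) (d b : ℕ → ℝ) (N : Set G.edgeSet) : ℕ → Set G.edgeSet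
  | 0 => N
  | k + 1 => clusteredSet G d b N k \
      {e | ClusteredIn G (d k) (b k) (clusteredSet G d b N k) e}

/-- The level-`k` isolated sets `𝒩_k`. -/
def isolatedSet (G : SimpleGraph V) (d b : ℕ → ℝ) (N : Set G.edgeSet) : ℕ → Set G.edgeSet
  | 0 => N
  | k + 1 => isolatedSet G d b N k \
      {e | IsolatedIn G (d k / 2) (b k + d k / 2) (isolatedSet G d b N k) e}

/-- `M_k(e)`: the collection of minimal-size subsets of `E` forcing `e` into the level-`k`
isolated set. -/
def minForcing (G : SimpleGraph V) (d b : ℕ → ℝ) (k : ℕ) (e : G.edgeSet) :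
    Set (Set G.edgeSet) :=
  {N | e ∈ isolatedSet G d b N k ∧ ∀ N' : Set G.edgeSet, N' ⊂ N → e ∉ isolatedSet G d b N' k}

end UFPaper

/-! A step of the construction decides whether an edge `f` survives by looking only at the
previous level within distance `b_i + d_i / 2` of `f`, so membership in `𝒩_k` depends only on
`N` near `f`, within `∑_{i<k} (b_i + d_i / 2)`; the growth condition keeps this radius below
`d_k / 2`. Cutting a forcing set `N` down to `N ∩ B_e(d_k / 2)` thus still forces `e`, and
minimality of `N` leaves nothing outside the ball. -/

namespace UFPaper

variable {V : Type*} {G : SimpleGraph V} {d b : ℕ → ℝ}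

lemma eDist_self (e : G.edgeSet) : eDist G e e = 0 := by
  simp [eDist]

lemma eDist_triangle (e f g : G.edgeSet) : eDist G e g ≤ eDist G e f + eDist G f g := by
  unfold eDist
  rw [← ENat.toENNReal_add]
  exact_mod_cast G.lineGraph.edist_triangle

lemma mem_ball_self (e : G.edgeSet) (r : ℝ) : e ∈ ball G e r := by
  simp [ball, eDist_self]

lemma isolatedIn_congr {r R : ℝ} {A A' : Set G.edgeSet} {f : G.edgeSet}
    (h : ∀ g ∈ ball G f R, g ∈ A ↔ g ∈ A') :
    IsolatedIn G r R A f ↔ IsolatedIn G r R A' f := by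
  refine forall_congr' fun g => ?_
  by_cases hg : g ∈ ball G f R
  · rw [h g hg]
  · simp [IsolatedPair, hg]

variable (d b) in
def localityRadius (k : ℕ) : ℝ≥0∞ :=
  ∑ i ∈ Finset.range k, ENNReal.ofReal (b i + d i / 2)

lemma localityRadius_succ (k : ℕ) :
    localityRadius d b (k + 1) = localityRadius d b k + ENNReal.ofReal (b k + d k / 2) :=
  Finset.sum_range_succ _ _

lemma mem_isolatedSet_congr {N N' : Set G.edgeSet} {f : G.edgeSet} (k : ℕ)
    (h : ∀ g, eDist G f g ≤ localityRadius d b k → (g ∈ N ↔ g ∈ N')) :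
    f ∈ isolatedSet G d b N k ↔ f ∈ isolatedSet G d b N' k := by
  induction k generalizing f with
  | zero => exact h f (by simp [eDist_self])
  | succ k ih =>
    have hnear : ∀ g ∈ ball G f (b k + d k / 2),
        g ∈ isolatedSet G d b N k ↔ g ∈ isolatedSet G d b N' k := fun g hg =>
      ih fun g' hg' => h g' <| calc
        eDist G f g' ≤ eDist G f g + eDist G g g' := eDist_triangle f g g'
        _ ≤ ENNReal.ofReal (b k + d k / 2) + localityRadius d b k := add_le_add hg hg'
        _ = localityRadius d b (k + 1) := by rw [localityRadius_succ, add_comm]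
    simp only [isolatedSet, Set.mem_sdiff, Set.mem_ofPred_eq]
    rw [isolatedIn_congr hnear, hnear f (mem_ball_self f _)]

lemma localityRadius_le_half (hd : ∀ k, 0 ≤ d k) (hb : ∀ k, 0 ≤ b k)
    (hgrow : ∀ k, 2 * (d k + b k) ≤ d (k + 1)) (k : ℕ) :
    localityRadius d b k ≤ ENNReal.ofReal (d k / 2) := by
  induction k with
  | zero => simp [localityRadius]
  | succ k ih =>
    have hstep : 0 ≤ b k + d k / 2 := by linarith [hd k, hb k]
    calc localityRadius d b (k + 1)
        = localityRadius d b k + ENNReal.ofReal (b k + d k / 2) := localityRadius_succ k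
      _ ≤ ENNReal.ofReal (d k / 2) + ENNReal.ofReal (b k + d k / 2) := by gcongr
      _ = ENNReal.ofReal (d k + b k) := by
        rw [← ENNReal.ofReal_add (by linarith [hd k]) hstep]; ring_nf
      _ ≤ ENNReal.ofReal (d (k + 1) / 2) := ENNReal.ofReal_le_ofReal (by linarith [hgrow k])

lemma subset_of_mem_minForcing {k : ℕ} {e : G.edgeSet} {N S : Set G.edgeSet}
    (hN : N ∈ minForcing G d b k e) (hS : ∀ g, eDist G e g ≤ localityRadius d b k → g ∈ S) :
    N ⊆ S := by
  obtain ⟨heN, hmin⟩ := hN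
  have he : e ∈ isolatedSet G d b (N ∩ S) k :=
    (mem_isolatedSet_congr k fun g hg => by simp [hS g hg]).1 heN
  by_contra hNS
  exact hmin _ (Set.inter_ssubset_left_iff.2 hNS) he

end UFPaper

open UFPaper in
theorem minForcing_subset_ball_general {V : Type*} (G : SimpleGraph V)
    (d b : ℕ → ℝ)
    (hdpos : ∀ k, 0 < d k) (hdb : ∀ k, d k ≤ b k)
    (hgrow : ∀ k, 2 * (d k + b k) ≤ d (k + 1)) :
    ∀ (e : G.edgeSet) (k : ℕ), 1 ≤ k →
      ∀ N ∈ minForcing G d b k e, N ⊆ ball G e (d k / 2) := by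
  intro e k _ N hN
  have hd : ∀ k, 0 ≤ d k := fun k => (hdpos k).le
  have hb : ∀ k, 0 ≤ b k := fun k => (hd k).trans (hdb k)
  exact subset_of_mem_minForcing hN fun g hg =>
    hg.trans (localityRadius_le_half hd hb hgrow k)

open UFPaper in
/-- If moreover `d_{k+1} ≥ 2(d_k + b_k)` for all `k`, then for every edge `e`,
every `k ≥ 1` and every `N ∈ M_k(e)`, one has `N ⊆ B_e(d_k / 2)`. -/
theorem minForcing_subset_ball {V : Type*} (G : SimpleGraph V)
    (d b : ℕ → ℝ) (hd_mono : Monotone d) (hb_mono : Monotone b)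
    (hdpos : ∀ k, 0 < d k) (hdb : ∀ k, d k ≤ b k)
    (hgrow : ∀ k, 2 * (d k + b k) ≤ d (k + 1)) :
    ∀ (e : G.edgeSet) (k : ℕ), 1 ≤ k →
      ∀ N ∈ minForcing G d b k e, N ⊆ ball G e (d k / 2) :=
  minForcing_subset_ball_general G d b hdpos hdb hgrow
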